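/- arXiv:1906.11138 — 8 statements merged into one kernel-verified Lean document; each statement's English description precedes it below -/
import Mathlib

section
/- Let F be a field of characteristic p > 0 and let n be a positive integer not divisible by p. Then the polynomial x^n + y^n + x^n y^n is irreducible in the polynomial ring F[x,y]. -/
open MvPolynomial

section Aux

open Polynomial

variable {R : Type*} [CommRing R] [IsDomain R]

lemma aux_natDegree {a b : R} (ha : a ≠ 0) {n : ℕ} (hn : 0 < n) :
    (Polynomial.C a * Polynomial.X ^ n + Polynomial.C b).natDegree = n := by
  rw [natDegree_add_C, natDegree_C_mul_X_pow _ _ ha]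

lemma aux_coeff_zero {a b : R} {n : ℕ} (hn : 0 < n) :
    (Polynomial.C a * Polynomial.X ^ n + Polynomial.C b).coeff 0 = b := by
  rw [Polynomial.coeff_add, Polynomial.coeff_C_mul, Polynomial.coeff_X_pow,
    if_neg hn.ne, mul_zero, zero_add, Polynomial.coeff_C, if_pos rfl]

lemma aux_reverse {a b : R} (ha : a ≠ 0) {n : ℕ} (hn : 0 < n) :
    (Polynomial.C a * Polynomial.X ^ n + Polynomial.C b).reverse
      = Polynomial.C b * Polynomial.X ^ n + Polynomial.C a := by
  rw [reverse, aux_natDegree ha hn, reflect_add, reflect_C_mul_X_pow, reflect_C,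
    revAt_le le_rfl, Nat.sub_self, pow_zero, mul_one, add_comm]

lemma irreducible_of_reverse_irreducible {f : R[X]}
    (hc : f.coeff 0 ≠ 0) (hd : 0 < f.natDegree) (h : Irreducible f.reverse) :
    Irreducible f := by
  have key : ∀ g : R[X], g.coeff 0 ≠ 0 → IsUnit g.reverse → IsUnit g := by
    intro g hg hu
    obtain ⟨r, hr, hrg⟩ := Polynomial.isUnit_iff.mp hu
    have htd : g.natTrailingDegree = 0 := natTrailingDegree_eq_zero.mpr (Or.inr hg)
    have hnd : g.natDegree = 0 := by
      have := reverse_natDegree g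
      rw [← hrg, natDegree_C, htd, Nat.sub_zero] at this
      omega
    have : g = Polynomial.C (g.coeff 0) := eq_C_of_natDegree_eq_zero hnd
    rw [this, ← reverse_C (g.coeff 0), ← this]
    exact hu
  refine ⟨not_isUnit_of_natDegree_pos f hd, fun a b hab => ?_⟩
  have h0 : a.coeff 0 * b.coeff 0 ≠ 0 := by
    rw [← mul_coeff_zero, ← hab]; exact hc
  have hrev : f.reverse = a.reverse * b.reverse := by
    rw [hab, reverse_mul_of_domain]
  rcases h.isUnit_or_isUnit hrev with hu | hu
  · exact Or.inl (key a (left_ne_zero_of_mul h0) hu)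
  · exact Or.inr (key b (right_ne_zero_of_mul h0) hu)

end Aux

theorem irreducible_xn_yn_xnyn (F : Type*) [Field F] (p : ℕ) (hp : 0 < p) [CharP F p]
    (n : ℕ) (hn : 0 < n) (hpn : ¬ p ∣ n) :
    Irreducible ((X 0) ^ n + (X 1) ^ n + (X 0) ^ n * (X 1) ^ n :
      MvPolynomial (Fin 2) F) := by
  classical
  -- the squarefree polynomial 1 + Y^n
  set q : Polynomial F := Polynomial.X ^ n - Polynomial.C (-1) with hq_def
  have hq_eq : q = Polynomial.X ^ n + 1 := by
    rw [hq_def, map_neg, Polynomial.C_1, sub_neg_eq_add]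
  have hq_sep : q.Separable := Polynomial.separable_X_pow_sub_C' p n (-1) hpn (by simp)
  have hq_sq : Squarefree q := hq_sep.squarefree
  -- the target polynomial in (F[Y])[X]
  set Yn : Polynomial F := Polynomial.X ^ n with hYn_def
  have hYn0 : Yn ≠ 0 := pow_ne_zero _ Polynomial.X_ne_zero
  have hq0 : q ≠ 0 := hq_sq.ne_zero
  set f1 : Polynomial (Polynomial F) :=
    Polynomial.C q * Polynomial.X ^ n + Polynomial.C Yn with hf1_def
  set g : Polynomial (Polynomial F) :=
    Polynomial.C Yn * Polynomial.X ^ n + Polynomial.C q with hg_def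
  -- a prime factor of q
  have hq_notunit : ¬ IsUnit q := by
    intro h
    have := Polynomial.natDegree_eq_zero_of_isUnit h
    rw [hq_def, Polynomial.natDegree_X_pow_sub_C] at this
    omega
  obtain ⟨π, hπ_irr, hπ_dvd⟩ :=
    WfDvdMonoid.exists_irreducible_factor hq_notunit hq0
  have hπ : Prime π := hπ_irr.prime
  -- g is Eisenstein at span {π}
  have hgE : g.IsEisensteinAt (Ideal.span {π}) := by
    constructor
    · rw [Polynomial.leadingCoeff, hg_def, aux_natDegree hYn0 hn]
      rw [Ideal.mem_span_singleton]
      rw [Polynomial.coeff_add, Polynomial.coeff_C_mul, Polynomial.coeff_X_pow,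
        if_pos rfl, mul_one, Polynomial.coeff_C, if_neg hn.ne', add_zero]
      intro hdvd
      have : π ∣ 1 := by
        have h1 : π ∣ q - Yn := dvd_sub hπ_dvd hdvd
        rwa [hq_eq, hYn_def, add_sub_cancel_left] at h1
      exact hπ.not_unit (isUnit_of_dvd_one this)
    · intro i hi
      rw [hg_def, aux_natDegree hYn0 hn] at hi
      rw [hg_def, Polynomial.coeff_add, Polynomial.coeff_C_mul, Polynomial.coeff_X_pow,
        if_neg hi.ne, mul_zero, zero_add, Polynomial.coeff_C]
      split
      · rw [Ideal.mem_span_singleton]; exact hπ_dvd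
      · exact Ideal.zero_mem _
    · rw [hg_def, aux_coeff_zero hn, Ideal.span_singleton_pow, Ideal.mem_span_singleton]
      intro hdvd
      exact hπ.not_unit (hq_sq π (by rwa [pow_two] at hdvd))
  have hg_prim : g.IsPrimitive := by
    intro r hr
    rw [Polynomial.C_dvd_iff_dvd_coeff] at hr
    have h1 : r ∣ Yn := by
      have := hr n
      rwa [hg_def, Polynomial.coeff_add, Polynomial.coeff_C_mul, Polynomial.coeff_X_pow,
        if_pos rfl, mul_one, Polynomial.coeff_C, if_neg hn.ne', add_zero] at this
    have h2 : r ∣ q := by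
      have := hr 0
      rwa [hg_def, aux_coeff_zero hn] at this
    have : r ∣ 1 := by
      have h3 : r ∣ q - Yn := dvd_sub h2 h1
      rwa [hq_eq, hYn_def, add_sub_cancel_left] at h3
    exact isUnit_of_dvd_one this
  have hg_irr : Irreducible g :=
    hgE.irreducible ((Ideal.span_singleton_prime hπ.ne_zero).mpr hπ)
      hg_prim (by rw [hg_def, aux_natDegree hYn0 hn]; exact hn)
  have hf1_irr : Irreducible f1 := by
    apply irreducible_of_reverse_irreducible
    · rw [hf1_def, aux_coeff_zero hn]; exact hYn0
    · rw [hf1_def, aux_natDegree hq0 hn]; exact hn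
    · rwa [hf1_def, aux_reverse hq0 hn, ← hg_def]
  -- transfer via the algebra isomorphism
  let inner : MvPolynomial (Fin 1) F ≃ₐ[F] Polynomial F :=
    (finSuccEquiv F 0).trans (Polynomial.mapAlgEquiv (isEmptyAlgEquiv F (Fin 0)))
  let e : MvPolynomial (Fin 2) F ≃ₐ[F] Polynomial (Polynomial F) :=
    (finSuccEquiv F 1).trans (Polynomial.mapAlgEquiv inner)
  have he : e ((X 0) ^ n + (X 1) ^ n + (X 0) ^ n * (X 1) ^ n) = f1 := by
    have hinner : inner (X 0) = Polynomial.X := by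
      show Polynomial.mapAlgEquiv (isEmptyAlgEquiv F (Fin 0)) ((finSuccEquiv F 0) (X 0)) = _
      rw [finSuccEquiv_X_zero, Polynomial.coe_mapAlgEquiv, Polynomial.map_X]
    have h0 : e (X 0) = Polynomial.X := by
      show Polynomial.mapAlgEquiv inner ((finSuccEquiv F 1) (X 0)) = _
      rw [finSuccEquiv_X_zero, Polynomial.coe_mapAlgEquiv, Polynomial.map_X]
    have h1 : e (X 1) = Polynomial.C Polynomial.X := by
      show Polynomial.mapAlgEquiv inner ((finSuccEquiv F 1) (X 1)) = _
      have h2 : (1 : Fin 2) = (0 : Fin 1).succ := rfl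
      rw [h2, finSuccEquiv_X_succ, Polynomial.coe_mapAlgEquiv, Polynomial.map_C]
      exact congrArg Polynomial.C hinner
    simp only [map_add, map_mul, map_pow]
    rw [h0, h1]
    simp only [hf1_def, hq_eq, hYn_def, map_add, Polynomial.C_1, ← Polynomial.C_pow]
    ring
  rw [← MulEquiv.irreducible_iff e] at *
  rwa [he]
end

section
/- Let F be a field of characteristic p > 0 and let n be a positive integer not divisible by p. Then there is no pair of coprime polynomials h₁, h₂ ∈ F[x]\{0} and constant c ∈ {−1, 4} with x^n h₂(x)^q = c(1+x^n) h₁(x)^q, where q = 4 or q is a prime dividing n. -/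
open Polynomial

theorem no_coprime_solution (F : Type*) [Field F] (p : ℕ) (hp : 0 < p) [CharP F p]
    (n : ℕ) (hn : 0 < n) (hpn : ¬ p ∣ n) :
    ∀ h₁ h₂ : F[X], h₁ ≠ 0 → h₂ ≠ 0 → IsCoprime h₁ h₂ →
      ∀ c : F, (c = -1 ∨ c = 4) →
        ∀ q : ℕ, (q = 4 ∨ (Nat.Prime q ∧ q ∣ n)) →
          X ^ n * h₂ ^ q ≠ C c * (1 + X ^ n) * h₁ ^ q := by
  intro h₁ h₂ hh1 hh2 hcop c hc q hq heq
  have hq2 : 2 ≤ q := by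
    rcases hq with rfl | ⟨hqp, _⟩
    · norm_num
    · exact hqp.two_le
  set f : F[X] := 1 + X ^ n with hf
  have hfeq : f = X ^ n - C (-1 : F) := by rw [hf, map_neg, map_one]; ring
  have hsep : (X ^ n - C (-1 : F)).Separable :=
    Polynomial.separable_X_pow_sub_C' p n (-1) hpn (by norm_num)
  have hsq : Squarefree f := by rw [hfeq]; exact hsep.squarefree
  have hfne : f ≠ 0 := hsq.ne_zero
  -- C c is a unit (else RHS = 0 but LHS ≠ 0)
  by_cases hcc : (C c : F[X]) = 0
  · rw [hcc, zero_mul, zero_mul] at heq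
    exact (mul_ne_zero (pow_ne_zero n X_ne_zero) (pow_ne_zero q hh2)) heq
  have hcu : IsUnit (C c : F[X]) := isUnit_C.2 (isUnit_iff_ne_zero.2 (by simpa using hcc))
  -- h₂^q ∣ f
  have hcop' : IsCoprime (h₂ ^ q) (h₁ ^ q) := (hcop.symm).pow
  have hd1 : h₂ ^ q ∣ C c * f * h₁ ^ q := by rw [← heq]; exact dvd_mul_left _ _
  have hd2 : h₂ ^ q ∣ C c * f := hcop'.dvd_of_dvd_mul_right hd1
  have hd3 : h₂ ^ q ∣ f := by
    rcases hd2 with ⟨t, ht⟩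
    obtain ⟨u, hu⟩ := hcu
    refine ⟨↑u⁻¹ * t, ?_⟩
    have : (↑u⁻¹ : F[X]) * C c = 1 := by rw [← hu, Units.inv_mul]
    calc f = (↑u⁻¹ * C c) * f := by rw [this, one_mul]
    _ = ↑u⁻¹ * (C c * f) := by ring
    _ = ↑u⁻¹ * (h₂ ^ q * t) := by rw [ht]
    _ = h₂ ^ q * (↑u⁻¹ * t) := by ring
  -- f ∣ h₂^q
  have hxf : IsCoprime ((X : F[X]) ^ n) f := ⟨-1, 1, by rw [hf]; ring⟩
  have hd4 : f ∣ X ^ n * h₂ ^ q := by rw [heq]; exact Dvd.dvd.mul_right (dvd_mul_left f _) _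
  have hd5 : f ∣ h₂ ^ q := hxf.symm.dvd_of_dvd_mul_left hd4
  -- degree of f is n, hence h₂ is not a unit
  have hdegf : f.natDegree = n := by
    rw [hf, add_comm, ← map_one (C : F →+* F[X]), natDegree_X_pow_add_C]
  have hdle : n ≤ (h₂ ^ q).natDegree := by
    have := Polynomial.natDegree_le_of_dvd hd5 (pow_ne_zero q hh2)
    rwa [hdegf] at this
  have hnotunit : ¬ IsUnit h₂ := by
    intro hu
    have : (h₂ ^ q).natDegree = 0 := natDegree_eq_zero_of_isUnit (hu.pow q)
    omega
  -- irreducible factor gives square dividing squarefree f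
  obtain ⟨r, hri, hrd⟩ := WfDvdMonoid.exists_irreducible_factor hnotunit hh2
  have hrr : r * r ∣ h₂ ^ q := by
    calc r * r ∣ h₂ * h₂ := mul_dvd_mul hrd hrd
    _ = h₂ ^ 2 := (sq h₂).symm
    _ ∣ h₂ ^ q := pow_dvd_pow h₂ hq2
  exact hri.not_isUnit (hsq r (hrr.trans hd3))
end

section
/- The Grams monoid G, the additive submonoid of ℚ≥0 generated by { 1/(2^n · p_n) : n ∈ ℕ }, where p_n is the n-th odd prime, is atomic. -/
def IsAddAtom {M : Type*} [AddCommMonoid M] (a : M) : Prop :=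
  ¬ IsAddUnit a ∧ ∀ x y : M, a = x + y → IsAddUnit x ∨ IsAddUnit y

def AddAtomic (M : Type*) [AddCommMonoid M] : Prop :=
  ∀ x : M, ¬ IsAddUnit x → ∃ l : Multiset M, (∀ a ∈ l, IsAddAtom a) ∧ l.sum = x

/-- The Grams monoid: the additive submonoid of `ℚ` generated by `1 / (2^n * p_n)`
for `n ≥ 1`, where `p_n = Nat.nth Nat.Prime n` is the `n`-th odd prime
(`Nat.nth Nat.Prime 1 = 3`, `Nat.nth Nat.Prime 2 = 5`, ...). -/
def GramsMonoid : AddSubmonoid ℚ :=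
  AddSubmonoid.closure
    {q : ℚ | ∃ n : ℕ, 1 ≤ n ∧ q = 1 / (2 ^ n * (Nat.nth Nat.Prime n : ℚ))}

/-!
Every element of `G` is a finite sum of generators, so it suffices that each generator is an
atom. In a monoid generated by nonnegative elements of an ordered group, a generator is an atom
as soon as it does not lie in the closure of the other generators. For `1 / (2^n p_n)` this holds
because `p_n` divides its denominator but the denominator of no other generator, and having
denominator prime to `p_n` is preserved under addition.
-/

namespace AddSubmonoid

theorem addAtomic_of_closure_eq_top {M : Type*} [AddCommMonoid M] {A : Set M}
    (hA : ∀ a ∈ A, IsAddAtom a) (hM : closure A = ⊤) : AddAtomic M := by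
  rintro x -
  induction (hM ▸ mem_top x : x ∈ closure A) using closure_induction with
  | mem a ha => exact ⟨{a}, by simpa using hA a ha, Multiset.sum_singleton a⟩
  | zero => exact ⟨0, by simp, Multiset.sum_zero⟩
  | add x y _ _ hx hy =>
    obtain ⟨lx, hlx, rfl⟩ := hx
    obtain ⟨ly, hly, rfl⟩ := hy
    exact ⟨lx + ly, by simpa [or_imp, forall_and] using ⟨hlx, hly⟩, Multiset.sum_add lx ly⟩

theorem mem_closure_diff_singleton_or_sub_mem_closure {G : Type*} [AddCommGroup G] {S : Set G}
    (s : G) {x : G} (hx : x ∈ closure S) : x ∈ closure (S \ {s}) ∨ x - s ∈ closure S := by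
  induction hx using closure_induction with
  | mem t ht =>
    by_cases hts : t = s
    · exact .inr (by simp [hts])
    · exact .inl (subset_closure ⟨ht, hts⟩)
  | zero => exact .inl (zero_mem _)
  | add x y hx hy ihx ihy =>
    rcases ihx with ihx | ihx
    · rcases ihy with ihy | ihy
      · exact .inl (add_mem ihx ihy)
      · exact .inr (by simpa [add_sub_assoc] using add_mem hx ihy)
    · exact .inr (by simpa [add_sub_right_comm] using add_mem ihx hy)

section OrderedGroup

variable {G : Type*} [AddCommGroup G] [PartialOrder G] [IsOrderedAddMonoid G] {S : Set G}

theorem nonneg_of_mem_closure (hS : ∀ s ∈ S, 0 ≤ s) {x : G} (hx : x ∈ closure S) : 0 ≤ x := by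
  induction hx using closure_induction with
  | mem s hs => exact hS s hs
  | zero => exact le_rfl
  | add x y _ _ hx hy => exact add_nonneg hx hy

theorem isAddUnit_iff_eq_zero_of_nonneg (hS : ∀ s ∈ S, 0 ≤ s) {x : closure S} :
    IsAddUnit x ↔ x = 0 := by
  refine ⟨fun hx ↦ ?_, fun h ↦ h ▸ isAddUnit_zero⟩
  obtain ⟨y, hxy⟩ := hx.exists_neg
  have hsum : (x : G) + y = 0 := congrArg Subtype.val hxy
  exact Subtype.ext ((add_eq_zero_iff_of_nonneg (nonneg_of_mem_closure hS x.2)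
    (nonneg_of_mem_closure hS y.2)).mp hsum).1

theorem isAddAtom_of_not_mem_closure_diff_singleton (hS : ∀ s ∈ S, 0 ≤ s) {s : G} (hs : s ∈ S)
    (hs' : s ∉ closure (S \ {s})) : IsAddAtom (⟨s, subset_closure hs⟩ : closure S) := by
  simp only [IsAddAtom, isAddUnit_iff_eq_zero_of_nonneg hS]
  refine ⟨fun h ↦ hs' (by rw [show s = 0 from congrArg Subtype.val h]; exact zero_mem _),
    fun x y hxy ↦ ?_⟩
  have hsxy : s = x + y := congrArg Subtype.val hxy
  rcases mem_closure_diff_singleton_or_sub_mem_closure s x.2 with hxs | hxs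
  · rcases mem_closure_diff_singleton_or_sub_mem_closure s y.2 with hys | hys
    · have hxy := add_mem hxs hys
      rw [← hsxy] at hxy
      exact absurd hxy hs'
    · have hx : (x : G) = -(y - s) := by rw [hsxy]; abel
      refine .inl (Subtype.ext (le_antisymm ?_ (nonneg_of_mem_closure hS x.2)))
      exact hx ▸ neg_nonpos.mpr (nonneg_of_mem_closure hS hys)
  · have hy : (y : G) = -(x - s) := by rw [hsxy]; abel
    refine .inr (Subtype.ext (le_antisymm ?_ (nonneg_of_mem_closure hS y.2)))
    exact hy ▸ neg_nonpos.mpr (nonneg_of_mem_closure hS hxs)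

end OrderedGroup

end AddSubmonoid

theorem Rat.not_dvd_den_of_mem_closure {p : ℕ} (hp : p.Prime) {S : Set ℚ}
    (hS : ∀ q ∈ S, ¬ p ∣ q.den) {q : ℚ} (hq : q ∈ AddSubmonoid.closure S) : ¬ p ∣ q.den := by
  induction hq using AddSubmonoid.closure_induction with
  | mem q hq => exact hS q hq
  | zero => simpa using hp.ne_one
  | add x y _ _ hx hy =>
    exact fun h ↦ (hp.dvd_mul.mp (h.trans (Rat.add_den_dvd x y))).elim hx hy

namespace Nat

theorem nth_prime_dvd_two_pow_mul_nth_prime_iff {m n : ℕ} (hn : 1 ≤ n) :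
    nth Prime n ∣ 2 ^ m * nth Prime m ↔ m = n := by
  have hpn := prime_nth_prime n
  refine ⟨fun h ↦ ?_, fun h ↦ h ▸ dvd_mul_left _ _⟩
  rcases hpn.dvd_mul.mp h with h | h
  · have h2 : nth Prime n = nth Prime 0 := by
      rw [nth_prime_zero_eq_two, ← prime_dvd_prime_iff_eq hpn prime_two]
      exact hpn.dvd_of_dvd_pow h
    have := nth_injective infinite_setOfPred_prime h2
    omega
  · exact (nth_injective infinite_setOfPred_prime
      ((prime_dvd_prime_iff_eq hpn (prime_nth_prime m)).mp h)).symm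

end Nat

theorem den_one_div_two_pow_mul_nth_prime (n : ℕ) :
    (1 / (2 ^ n * (Nat.nth Nat.Prime n : ℚ))).den = 2 ^ n * Nat.nth Nat.Prime n := by
  have hpos : 0 < 2 ^ n * Nat.nth Nat.Prime n := by positivity [(Nat.prime_nth_prime n).pos]
  rw [one_div, ← Rat.inv_natCast_den_of_pos hpos]
  push_cast
  rfl

def gramsGenerators : Set ℚ :=
  {q : ℚ | ∃ n : ℕ, 1 ≤ n ∧ q = 1 / (2 ^ n * (Nat.nth Nat.Prime n : ℚ))}

theorem nonneg_of_mem_gramsGenerators {q : ℚ} (hq : q ∈ gramsGenerators) : 0 ≤ q := by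
  obtain ⟨n, -, rfl⟩ := hq
  positivity

theorem not_mem_closure_gramsGenerators_diff_singleton {s : ℚ} (hs : s ∈ gramsGenerators) :
    s ∉ AddSubmonoid.closure (gramsGenerators \ {s}) := by
  obtain ⟨n, hn, rfl⟩ := hs
  refine fun h ↦ Rat.not_dvd_den_of_mem_closure (Nat.prime_nth_prime n) ?_ h ?_
  · rintro _ ⟨⟨m, -, rfl⟩, hmn⟩ hdvd
    rw [den_one_div_two_pow_mul_nth_prime, Nat.nth_prime_dvd_two_pow_mul_nth_prime_iff hn] at hdvd
    exact hmn (hdvd ▸ rfl)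
  · rw [den_one_div_two_pow_mul_nth_prime]
    exact dvd_mul_left _ _

theorem gramsMonoid_atomic : AddAtomic GramsMonoid := by
  refine AddSubmonoid.addAtomic_of_closure_eq_top (A := Subtype.val ⁻¹' gramsGenerators)
    (fun ⟨s, _⟩ hs ↦ ?_) AddSubmonoid.closure_closure_coe_preimage
  exact AddSubmonoid.isAddAtom_of_not_mem_closure_diff_singleton
    (fun _ ↦ nonneg_of_mem_gramsGenerators) hs (not_mem_closure_gramsGenerators_diff_singleton hs)
end

section
/- The Grams monoid G = ⟨1/(2^n · p_n) : n ∈ ℕ⟩, where p_n is the n-th odd prime, does not satisfy the ACCP; specifically, the chain of principal ideals 1/2^n + G is strictly increasing and does not stabilize. -/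
lemma one_div_two_pow_mem_gramsMonoid (n : ℕ) : (1 : ℚ) / 2 ^ n ∈ GramsMonoid := by
  set p := Nat.nth Nat.Prime (n + 1)
  have hp : (p : ℚ) ≠ 0 := by exact_mod_cast (Nat.prime_nth_prime (n + 1)).ne_zero
  have hgen : (1 : ℚ) / (2 ^ (n + 1) * p) ∈ GramsMonoid :=
    AddSubmonoid.subset_closure ⟨n + 1, Nat.le_add_left 1 n, rfl⟩
  have hsmul : (2 * p) • ((1 : ℚ) / (2 ^ (n + 1) * p)) = 1 / 2 ^ n := by
    rw [nsmul_eq_mul]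
    push_cast
    field_simp
    ring
  exact hsmul ▸ GramsMonoid.nsmul_mem hgen (2 * p)

lemma gramsMonoid_le_nonneg : GramsMonoid ≤ AddSubmonoid.nonneg ℚ :=
  AddSubmonoid.closure_le.2 <| by
    rintro _ ⟨n, -, rfl⟩
    exact AddSubmonoid.mem_nonneg.2 (by positivity)

/-- The chain of principal ideals `1/2^n + G` of the Grams monoid is strictly
increasing and hence does not stabilize: `1/2^n ∈ G` for all `n`, each `1/2^n` lies in
the ideal generated by `1/2^(n+1)`, but `1/2^(n+1)` never lies in the ideal generated
by `1/2^n`. In particular `G` fails the ACCP. -/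
theorem gramsMonoid_not_accp :
    (∀ n : ℕ, (1 : ℚ) / 2 ^ n ∈ GramsMonoid) ∧
    (∀ n : ℕ, ∃ d ∈ GramsMonoid, (1 : ℚ) / 2 ^ n = 1 / 2 ^ (n + 1) + d) ∧
    (∀ n : ℕ, ¬ ∃ d ∈ GramsMonoid, (1 : ℚ) / 2 ^ (n + 1) = 1 / 2 ^ n + d) := by
  refine ⟨one_div_two_pow_mem_gramsMonoid, fun n => ?_, fun n => ?_⟩
  · refine ⟨1 / 2 ^ (n + 1), one_div_two_pow_mem_gramsMonoid (n + 1), ?_⟩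
    rw [pow_succ]
    ring
  · rintro ⟨d, hd, heq⟩
    have hd_nonneg : 0 ≤ d := AddSubmonoid.mem_nonneg.1 (gramsMonoid_le_nonneg hd)
    have hlt : (1 : ℚ) / 2 ^ (n + 1) < 1 / 2 ^ n :=
      one_div_pow_lt_one_div_pow_of_lt one_lt_two n.lt_succ_self
    linarith
end

section
/- For each prime p, the Puiseux monoid M_p generated by { 1/(p^n · p_n) : n ∈ ℕ, p_n ≠ p }, where {p_n} is the increasing enumeration of all primes, is atomic but does not satisfy the ACCP. -/
def AddACCP (M : Type*) [AddCommMonoid M] : Prop :=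
  ∀ f : ℕ → M, (∀ n, ∃ d, f n = f (n + 1) + d) →
    ∃ N, ∀ n ≥ N, ∃ d, f n = f N + d

/-- The Puiseux monoid `M_p = ⟨ 1/(p^n p_n) : p_n ≠ p ⟩`, where `p_n` is the `n`-th
prime in increasing order (here indexed from `0`, so the generator indexed by `n`
is `1 / (p^(n+1) * Nat.nth Nat.Prime n)`, taken whenever `Nat.nth Nat.Prime n ≠ p`). -/
def Mp (p : ℕ) : AddSubmonoid ℚ :=
  AddSubmonoid.closure
    {q : ℚ | ∃ n : ℕ, Nat.nth Nat.Prime n ≠ p ∧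
      q = 1 / ((p : ℚ) ^ (n + 1) * (Nat.nth Nat.Prime n : ℚ))}


/-!
Every generator `1/(p^(n+1) p_n)` of `M_p` is an atom: it is the only generator whose denominator
is divisible by `p_n`, and denominators prime to `p_n` are closed under addition, so any
factorisation of it into generators must use the generator itself, and positivity forces the rest
of the factorisation to be empty. Since `M_p` is generated by atoms, it is atomic.
On the other hand every `1/p^(n+1)` lies in `M_p` (as a multiple of a generator of larger index),
and `1/p^(n+1) = p • 1/p^(n+2)`, so these elements form a strictly ascending chain of principal
ideals that never stabilises.
-/

theorem AddSubmonoid.eq_zero_of_isAddUnit_of_le_nonneg {M : AddSubmonoid ℚ}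
    (hM : M ≤ AddSubmonoid.nonneg ℚ) {x : M} (hx : IsAddUnit x) : x = 0 := by
  obtain ⟨y, hxy⟩ := isAddUnit_iff_exists_neg.1 hx
  have hsum : (x : ℚ) + y = 0 := congrArg Subtype.val hxy
  have hx0 : 0 ≤ (x : ℚ) := hM x.2
  have hy0 : 0 ≤ (y : ℚ) := hM y.2
  exact Subtype.ext (by simp only [ZeroMemClass.coe_zero]; linarith)

theorem addAtomic_of_closure_eq_top {M : Type*} [AddCommMonoid M] {S : Set M}
    (hS : AddSubmonoid.closure S = ⊤) (hatom : ∀ s ∈ S, IsAddAtom s) : AddAtomic M := by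
  intro x _
  obtain ⟨l, hlS, rfl⟩ :=
    AddSubmonoid.exists_multiset_of_mem_closure (hS ▸ AddSubmonoid.mem_top x)
  exact ⟨l, fun a ha => hatom a (hlS a ha), rfl⟩

theorem not_dvd_den_multiset_sum {q : ℕ} (hq : q.Prime) {l : Multiset ℚ}
    (hl : ∀ x ∈ l, ¬ q ∣ x.den) : ¬ q ∣ l.sum.den := by
  induction l using Multiset.induction_on with
  | empty => simpa using hq.ne_one
  | cons a l ih =>
    intro h
    rw [Multiset.sum_cons] at h
    rcases hq.dvd_mul.1 (h.trans (Rat.add_den_dvd _ _)) with ha | hl'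
    · exact hl a (Multiset.mem_cons_self a l) ha
    · exact ih (fun x hx => hl x (Multiset.mem_cons_of_mem hx)) hl'

theorem Multiset.eq_singleton_of_sum_eq_of_dvd_den {q : ℕ} (hq : q.Prime) {s : ℚ}
    (hs : q ∣ s.den) {l : Multiset ℚ} (hpos : ∀ t ∈ l, 0 < t)
    (hden : ∀ t ∈ l, t ≠ s → ¬ q ∣ t.den) (hl : l.sum = s) : l = {s} := by
  by_cases hsl : s ∈ l
  · obtain ⟨r, rfl⟩ := Multiset.exists_cons_of_mem hsl
    have hr : r.sum = 0 := by simpa using hl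
    suffices r = 0 by rw [this]; rfl
    by_contra hr0
    obtain ⟨t, ht⟩ := Multiset.exists_mem_of_ne_zero hr0
    have hle := Multiset.single_le_sum
      (fun u hu => (hpos u (Multiset.mem_cons_of_mem hu)).le) t ht
    linarith [hpos t (Multiset.mem_cons_of_mem ht)]
  · exact absurd hs (hl ▸ not_dvd_den_multiset_sum hq fun t ht =>
      hden t ht (ne_of_mem_of_not_mem ht hsl))

theorem isAddAtom_of_forall_sum_eq {S : Set ℚ} (hS : ∀ t ∈ S, 0 < t)
    {s : AddSubmonoid.closure S} (hs : (s : ℚ) ∈ S)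
    (hsum : ∀ l : Multiset ℚ, (∀ t ∈ l, t ∈ S) → l.sum = s → l = {(s : ℚ)}) :
    IsAddAtom s := by
  have hnonneg : AddSubmonoid.closure S ≤ AddSubmonoid.nonneg ℚ :=
    AddSubmonoid.closure_le.2 fun t ht => (hS t ht).le
  refine ⟨fun hunit => (hS s hs).ne' (congrArg Subtype.val
    (AddSubmonoid.eq_zero_of_isAddUnit_of_le_nonneg hnonneg hunit)), ?_⟩
  rintro ⟨x, hx⟩ ⟨y, hy⟩ hxy
  obtain ⟨lx, hlxS, rfl⟩ := AddSubmonoid.exists_multiset_of_mem_closure hx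
  obtain ⟨ly, hlyS, rfl⟩ := AddSubmonoid.exists_multiset_of_mem_closure hy
  have hl : lx + ly = {(s : ℚ)} :=
    hsum _ (fun t ht => (Multiset.mem_add.1 ht).elim (hlxS t) (hlyS t))
      (by rw [Multiset.sum_add]; exact (congrArg Subtype.val hxy).symm)
  have hcard : Multiset.card lx + Multiset.card ly = 1 := by
    simpa using congrArg Multiset.card hl
  rcases Nat.add_eq_one_iff.1 hcard with ⟨h0, -⟩ | ⟨-, h0⟩
  · obtain rfl := Multiset.card_eq_zero.1 h0
    left
    rw [show (⟨_, hx⟩ : AddSubmonoid.closure S) = 0 from Subtype.ext Multiset.sum_zero]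
    exact isAddUnit_zero
  · obtain rfl := Multiset.card_eq_zero.1 h0
    right
    rw [show (⟨_, hy⟩ : AddSubmonoid.closure S) = 0 from Subtype.ext Multiset.sum_zero]
    exact isAddUnit_zero

theorem addAtomic_closure_of_forall_sum_eq {S : Set ℚ} (hS : ∀ t ∈ S, 0 < t)
    (hsum : ∀ s ∈ S, ∀ l : Multiset ℚ, (∀ t ∈ l, t ∈ S) → l.sum = s → l = {s}) :
    AddAtomic (AddSubmonoid.closure S) :=
  addAtomic_of_closure_eq_top AddSubmonoid.closure_closure_coe_preimage fun s hs =>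
    isAddAtom_of_forall_sum_eq hS hs (hsum s hs)

theorem not_addACCP_of_eq_nsmul_succ {M : AddSubmonoid ℚ} (hM : M ≤ AddSubmonoid.nonneg ℚ)
    {k : ℕ} (hk : 2 ≤ k) (x : ℕ → ℚ) (hxM : ∀ n, x n ∈ M) (hx0 : ∀ n, x n ≠ 0)
    (hx : ∀ n, x n = k • x (n + 1)) : ¬ AddACCP M := by
  intro hacc
  let y : ℕ → M := fun n => ⟨x n, hxM n⟩
  have hchain : ∀ n, ∃ d, y n = y (n + 1) + d := fun n =>
    ⟨⟨(k - 1) • x (n + 1), nsmul_mem (hxM (n + 1)) _⟩, Subtype.ext <| by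
      show x n = x (n + 1) + (k - 1) • x (n + 1)
      rw [hx n, ← succ_nsmul', Nat.sub_add_cancel (by omega : 1 ≤ k)]⟩
  obtain ⟨N, hN⟩ := hacc y hchain
  obtain ⟨d, hd⟩ := hN (N + 1) N.le_succ
  have hdq : x (N + 1) = k * x (N + 1) + d := by
    rw [← nsmul_eq_mul, ← hx N]
    exact congrArg Subtype.val hd
  have hxN : 0 ≤ x (N + 1) := hM (hxM (N + 1))
  have hd0 : 0 ≤ (d : ℚ) := hM d.2
  have hk' : (2 : ℚ) ≤ k := by exact_mod_cast hk
  exact hx0 (N + 1) (by nlinarith)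

namespace Mp

noncomputable def gen (p n : ℕ) : ℚ := 1 / ((p : ℚ) ^ (n + 1) * (Nat.nth Nat.Prime n : ℚ))

theorem eq_closure (p : ℕ) :
    Mp p = AddSubmonoid.closure {q : ℚ | ∃ n, Nat.nth Nat.Prime n ≠ p ∧ q = gen p n} := rfl

theorem gen_eq_inv (p n : ℕ) :
    gen p n = ((p ^ (n + 1) * Nat.nth Nat.Prime n : ℕ) : ℚ)⁻¹ := by
  rw [gen, one_div]
  push_cast
  rfl

theorem gen_pos {p : ℕ} (hp : p.Prime) (n : ℕ) : 0 < gen p n := by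
  rw [gen_eq_inv]
  exact inv_pos.2 (by exact_mod_cast Nat.mul_pos (pow_pos hp.pos _) (Nat.prime_nth_prime n).pos)

theorem den_gen {p : ℕ} (hp : p.Prime) (n : ℕ) :
    (gen p n).den = p ^ (n + 1) * Nat.nth Nat.Prime n := by
  rw [gen_eq_inv, Rat.inv_natCast_den, if_neg]
  exact Nat.mul_ne_zero (pow_ne_zero _ hp.ne_zero) (Nat.prime_nth_prime n).ne_zero

theorem not_dvd_den_gen {p : ℕ} (hp : p.Prime) {m n : ℕ} (hmn : m ≠ n)
    (hn : Nat.nth Nat.Prime n ≠ p) : ¬ Nat.nth Nat.Prime n ∣ (gen p m).den := by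
  have hqn := Nat.prime_nth_prime n
  rw [den_gen hp, hqn.dvd_mul]
  rintro (h | h)
  · exact hn ((Nat.prime_dvd_prime_iff_eq hqn hp).1 (hqn.dvd_of_dvd_pow h))
  · exact hmn (Nat.nth_injective Nat.infinite_setOfPred_prime
      ((Nat.prime_dvd_prime_iff_eq hqn (Nat.prime_nth_prime m)).1 h)).symm

theorem eq_singleton_of_sum_eq_gen {p : ℕ} (hp : p.Prime) {n : ℕ}
    (hn : Nat.nth Nat.Prime n ≠ p) {l : Multiset ℚ}
    (hlS : ∀ t ∈ l, ∃ m, Nat.nth Nat.Prime m ≠ p ∧ t = gen p m)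
    (hl : l.sum = gen p n) : l = {gen p n} := by
  refine Multiset.eq_singleton_of_sum_eq_of_dvd_den (Nat.prime_nth_prime n)
    (by rw [den_gen hp]; exact dvd_mul_left _ _) (fun t ht => ?_) (fun t ht htn => ?_) hl
  · obtain ⟨m, -, rfl⟩ := hlS t ht
    exact gen_pos hp m
  · obtain ⟨m, -, rfl⟩ := hlS t ht
    exact not_dvd_den_gen hp (fun h => htn (h ▸ rfl)) hn

theorem le_nonneg {p : ℕ} (hp : p.Prime) : Mp p ≤ AddSubmonoid.nonneg ℚ :=
  AddSubmonoid.closure_le.2 fun _ ⟨n, _, hq⟩ => hq ▸ (gen_pos hp n).le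

theorem inv_pow_mem {p : ℕ} (hp : p.Prime) (n : ℕ) : 1 / (p : ℚ) ^ (n + 1) ∈ Mp p := by
  have hq : Nat.nth Nat.Prime (n + p) ≠ p := by
    have := Nat.add_two_le_nth_prime (n + p)
    omega
  have hp0 : (p : ℚ) ≠ 0 := by exact_mod_cast hp.ne_zero
  have hq0 : (Nat.nth Nat.Prime (n + p) : ℚ) ≠ 0 := by
    exact_mod_cast (Nat.prime_nth_prime (n + p)).ne_zero
  have hval : (Nat.nth Nat.Prime (n + p) * p ^ p) • gen p (n + p) = 1 / (p : ℚ) ^ (n + 1) := by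
    rw [gen, nsmul_eq_mul]
    push_cast
    field_simp
    ring
  have hgen : gen p (n + p) ∈ Mp p := AddSubmonoid.subset_closure ⟨n + p, hq, rfl⟩
  exact hval ▸ nsmul_mem hgen _

end Mp

theorem Mp_atomic_not_accp (p : ℕ) (hp : p.Prime) :
    AddAtomic (Mp p) ∧ ¬ AddACCP (Mp p) := by
  refine ⟨?_, ?_⟩
  · rw [Mp.eq_closure]
    refine addAtomic_closure_of_forall_sum_eq ?_ ?_
    · rintro _ ⟨n, -, rfl⟩
      exact Mp.gen_pos hp n
    · rintro _ ⟨n, hn, rfl⟩ l hlS hl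
      exact Mp.eq_singleton_of_sum_eq_gen hp hn hlS hl
  · have hp0 : (p : ℚ) ≠ 0 := by exact_mod_cast hp.ne_zero
    refine not_addACCP_of_eq_nsmul_succ (Mp.le_nonneg hp) hp.two_le _ (Mp.inv_pow_mem hp)
      (fun n => by positivity) (fun n => ?_)
    rw [nsmul_eq_mul]
    field_simp
    ring
end

section
/- Let {ℓ_n} be a strictly increasing sequence of positive integers with 3^{ℓ_n − ℓ_{n−1}} > 2^{n+1} for all n ≥ 1, and set a_n = (2^n 3^{ℓ_n} − 1)/(2^{2n} 3^{ℓ_n}) and b_n = (2^n 3^{ℓ_n} + 1)/(2^{2n} 3^{ℓ_n}). Then the sequence b_1, a_1, b_2, a_2, ... is strictly decreasing and bounded above by 1. -/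
theorem seq_decreasing (ℓ : ℕ → ℕ) (hmono : StrictMono ℓ) (hpos : ∀ n, 0 < ℓ n)
    (hgrow : ∀ n ≥ 1, (2 : ℕ) ^ (n + 1) < 3 ^ (ℓ n - ℓ (n - 1)))
    (a b : ℕ → ℚ)
    (ha : ∀ n, a n = ((2 ^ n * 3 ^ (ℓ n) - 1) : ℚ) / (2 ^ (2 * n) * 3 ^ (ℓ n)))
    (hb : ∀ n, b n = ((2 ^ n * 3 ^ (ℓ n) + 1) : ℚ) / (2 ^ (2 * n) * 3 ^ (ℓ n))) :
    ∀ n ≥ 1, b n < 1 ∧ a n < b n ∧ b (n + 1) < a n := by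
  intro n hn
  have hA : (2:ℚ) ≤ 2 ^ n := by
    calc (2:ℚ) = 2 ^ 1 := (pow_one 2).symm
    _ ≤ 2 ^ n := pow_le_pow_right₀ (by norm_num) hn
  have hApos : (0:ℚ) < 2 ^ n := by positivity
  have hB : (3:ℚ) ≤ 3 ^ (ℓ n) := by
    calc (3:ℚ) = 3 ^ 1 := (pow_one 3).symm
    _ ≤ 3 ^ (ℓ n) := pow_le_pow_right₀ (by norm_num) (hpos n)
  have hBpos : (0:ℚ) < 3 ^ (ℓ n) := by positivity
  have hCpos : (0:ℚ) < 3 ^ (ℓ (n+1)) := by positivity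
  have hC : 3 * (3:ℚ) ^ (ℓ n) ≤ 3 ^ (ℓ (n+1)) := by
    have h : ℓ n + 1 ≤ ℓ (n+1) := hmono (Nat.lt_succ_self n)
    calc 3 * (3:ℚ) ^ (ℓ n) = 3 ^ (ℓ n + 1) := by ring
    _ ≤ 3 ^ (ℓ (n+1)) := pow_le_pow_right₀ (by norm_num) h
  have hd : (0:ℚ) < 2 ^ (2*n) * 3 ^ (ℓ n) := by positivity
  have hd' : (0:ℚ) < 2 ^ (2*(n+1)) * 3 ^ (ℓ (n+1)) := by positivity
  have e1 : (2:ℚ) ^ (2*n) = 2 ^ n * 2 ^ n := by rw [two_mul, pow_add]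
  have e2 : (2:ℚ) ^ (n+1) = 2 * 2 ^ n := by rw [pow_succ]; ring
  have e3 : (2:ℚ) ^ (2*(n+1)) = 4 * (2 ^ n * 2 ^ n) := by
    rw [two_mul, pow_add, e2]; ring
  refine ⟨?_, ?_, ?_⟩
  · rw [hb, div_lt_one hd, e1]
    have h1 : 2*(2^n*3^(ℓ n)) ≤ 2^n*(2^n*(3:ℚ)^(ℓ n)) :=
      mul_le_mul_of_nonneg_right hA (by positivity)
    have h2 : (2:ℚ)*3 ≤ 2^n*3^(ℓ n) := mul_le_mul hA hB (by norm_num) (le_of_lt hApos)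
    nlinarith
  · rw [ha, hb, div_lt_div_iff₀ hd hd]
    nlinarith
  · rw [ha, hb, div_lt_div_iff₀ hd' hd, e1, e2, e3]
    nlinarith [mul_pos hApos hBpos, mul_pos hApos hCpos, mul_pos hBpos hCpos,
      mul_pos (mul_pos hApos hApos) hCpos, mul_pos (mul_pos hApos hBpos) hCpos,
      mul_le_mul_of_nonneg_right hA (show (0:ℚ) ≤ 2^n*2^n*3^(ℓ n)*3^(ℓ (n+1)) by positivity),
      mul_le_mul_of_nonneg_right hB (show (0:ℚ) ≤ 2^n*2^n*3^(ℓ (n+1)) by positivity),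
      mul_le_mul_of_nonneg_right hC (show (0:ℚ) ≤ 2^n*2^n by positivity)]
end

section
/- Let {ℓ_n} be a strictly increasing sequence of positive integers with 3^{ℓ_n − ℓ_{n−1}} > 2^{n+1} for all n ≥ 1. Then the Puiseux monoid M generated by A = { a_n, b_n : n ∈ ℕ }, where a_n = (2^n 3^{ℓ_n} − 1)/(2^{2n} 3^{ℓ_n}) and b_n = (2^n 3^{ℓ_n} + 1)/(2^{2n} 3^{ℓ_n}), is atomic with set of atoms exactly A. -/
open AddSubmonoid

theorem Multiset.exists_map_eq_of_subset_image {α β : Type*} {f : α → β} {I : Set α}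
    {s : Multiset β} (hs : ∀ x ∈ s, x ∈ f '' I) :
    ∃ u : Multiset α, (∀ i ∈ u, i ∈ I) ∧ u.map f = s := by
  induction s using Multiset.induction_on with
  | empty => exact ⟨0, by simp, rfl⟩
  | cons x s ih =>
    obtain ⟨i, hi, rfl⟩ := hs _ (Multiset.mem_cons_self _ _)
    obtain ⟨u, hu, rfl⟩ := ih fun y hy => hs y (Multiset.mem_cons_of_mem hy)
    exact ⟨i ::ₘ u, by simp +contextual [or_imp, hi, hu], by simp⟩

def HasOnlyTrivialSums {M : Type*} [AddCommMonoid M] (S : Set M) : Prop :=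
  ∀ s : Multiset M, (∀ x ∈ s, x ∈ S) → s.sum ∈ S → Multiset.card s = 1

namespace HasOnlyTrivialSums

variable {M : Type*} [AddCommMonoid M] {S : Set M}

theorem zero_notMem (hS : HasOnlyTrivialSums S) : (0 : M) ∉ S := fun h0 => by
  simpa using hS {0, 0} (by simpa using h0) (by simpa using h0)

theorem eq_zero_of_isAddUnit (hS : HasOnlyTrivialSums S) {z : closure S} (hz : IsAddUnit z) :
    z = 0 := by
  rcases S.eq_empty_or_nonempty with rfl | ⟨x, hx⟩
  · simpa [AddSubmonoid.closure_empty, mem_bot] using z.2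
  obtain ⟨w, hzw, -⟩ := isAddUnit_iff_exists.1 hz
  obtain ⟨s, hsS, hs⟩ := exists_multiset_of_mem_closure z.2
  obtain ⟨t, htS, ht⟩ := exists_multiset_of_mem_closure w.2
  have hsum : (x ::ₘ (s + t)).sum = x := by
    rw [Multiset.sum_cons, Multiset.sum_add, hs, ht, ← coe_add, hzw, coe_zero, add_zero]
  have hcard := hS _ (by simp +contextual [or_imp, hx, hsS, htS]) (hsum ▸ hx)
  rw [Multiset.card_cons, Multiset.card_add] at hcard
  ext
  rw [← hs, Multiset.card_eq_zero.1 (by omega : Multiset.card s = 0), Multiset.sum_zero, coe_zero]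

theorem isAddAtom (hS : HasOnlyTrivialSums S) {x : M} (hx : x ∈ S) :
    IsAddAtom (⟨x, subset_closure hx⟩ : closure S) := by
  refine ⟨fun hu => hS.zero_notMem ?_, fun y z hyz => ?_⟩
  · have h := congrArg Subtype.val (hS.eq_zero_of_isAddUnit hu)
    simp only [coe_zero] at h
    exact h ▸ hx
  obtain ⟨s, hsS, hs⟩ := exists_multiset_of_mem_closure y.2
  obtain ⟨t, htS, ht⟩ := exists_multiset_of_mem_closure z.2
  have hsum : (s + t).sum = x := by
    rw [Multiset.sum_add, hs, ht, ← coe_add, ← hyz]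
  have hcard := hS _ (by simp +contextual [or_imp, hsS, htS]) (hsum ▸ hx)
  have isAddUnit_of_card_eq_zero {u : Multiset M} {v : closure S} (huv : u.sum = v)
      (hu : Multiset.card u = 0) : IsAddUnit v := by
    rw [Multiset.card_eq_zero.1 hu, Multiset.sum_zero] at huv
    obtain rfl : v = 0 := Subtype.ext huv.symm
    exact isAddUnit_zero
  rw [Multiset.card_add] at hcard
  exact (show Multiset.card s = 0 ∨ Multiset.card t = 0 by omega).imp
    (isAddUnit_of_card_eq_zero hs) (isAddUnit_of_card_eq_zero ht)

theorem mem_of_isAddAtom (hS : HasOnlyTrivialSums S) {x : M} (hx : x ∈ closure S)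
    (hat : IsAddAtom (⟨x, hx⟩ : closure S)) : x ∈ S := by
  obtain ⟨s, hsS, rfl⟩ := exists_multiset_of_mem_closure hx
  induction s using Multiset.induction_on with
  | empty => exact (hat.1 isAddUnit_zero).elim
  | cons y t _ =>
    have hy : y ∈ S := hsS y (Multiset.mem_cons_self y t)
    have ht : t.sum ∈ closure S :=
      multiset_sum_mem _ _ fun z hz => subset_closure (hsS z (Multiset.mem_cons_of_mem hz))
    rcases hat.2 ⟨y, subset_closure hy⟩ ⟨t.sum, ht⟩ (by ext; simp) with hu | hu
    · have : y = 0 := by simpa using congrArg Subtype.val (hS.eq_zero_of_isAddUnit hu)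
      exact absurd (this ▸ hy) hS.zero_notMem
    · have : t.sum = 0 := by simpa using congrArg Subtype.val (hS.eq_zero_of_isAddUnit hu)
      simpa [this] using hy

theorem exists_isAddAtom_iff (hS : HasOnlyTrivialSums S) {x : M} :
    (∃ h : x ∈ closure S, IsAddAtom (⟨x, h⟩ : closure S)) ↔ x ∈ S :=
  ⟨fun ⟨h, hat⟩ => hS.mem_of_isAddAtom h hat, fun hx => ⟨_, hS.isAddAtom hx⟩⟩

theorem of_image {ι : Type*} {f : ι → M} {I : Set ι}
    (h : ∀ u : Multiset ι, (∀ i ∈ u, i ∈ I) → ∀ j ∈ I, (u.map f).sum = f j →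
      Multiset.card u = 1) :
    HasOnlyTrivialSums (f '' I) := by
  intro s hs ⟨j, hj, hsum⟩
  obtain ⟨u, hu, rfl⟩ := Multiset.exists_map_eq_of_subset_image hs
  rw [Multiset.card_map]
  exact h u hu j hj hsum.symm

end HasOnlyTrivialSums

theorem addAtomic_closure {M : Type*} [AddCommMonoid M] {S : Set M}
    (hS : ∀ x (hx : x ∈ S), IsAddAtom (⟨x, subset_closure hx⟩ : closure S)) :
    AddAtomic (closure S) := by
  suffices ∀ x (hx : x ∈ closure S),
      ∃ l : Multiset (closure S), (∀ a ∈ l, IsAddAtom a) ∧ l.sum = ⟨x, hx⟩ from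
    fun x _ => this x x.2
  intro x hx
  induction hx using closure_induction with
  | mem x hx => exact ⟨{⟨x, _⟩}, by simpa using hS x hx, by simp⟩
  | zero => exact ⟨0, by simp, rfl⟩
  | add x y _ _ ihx ihy =>
    obtain ⟨l, hl, hls⟩ := ihx
    obtain ⟨m, hm, hms⟩ := ihy
    exact ⟨l + m, by simp +contextual [or_imp, hl, hm], by rw [Multiset.sum_add, hls, hms]; rfl⟩

open Finset

theorem Multiset.sum_map_eq_sum_range_sum_count {β M : Type*} [Fintype β] [DecidableEq β]
    [AddCommMonoid M] (f : ℕ × β → M) {u : Multiset (ℕ × β)} {N : ℕ} (hu : ∀ p ∈ u, p.1 ≤ N) :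
    (u.map f).sum = ∑ k ∈ Finset.range (N + 1), ∑ b, u.count (k, b) • f (k, b) := by
  rw [Finset.sum_multiset_map_count,
    ← Finset.sum_product' (f := fun k b => u.count (k, b) • f (k, b))]
  refine sum_subset (fun p hp => ?_) (fun p _ hp => ?_)
  · simpa [mem_product] using Nat.lt_succ_of_le (hu p (Multiset.mem_toFinset.1 hp))
  · rw [Multiset.count_eq_zero.2 (mt Multiset.mem_toFinset.2 hp), zero_smul]

theorem Finset.sum_eq_one_of_sum_mul_eq {ι K : Type*} [CommRing K] [LinearOrder K]
    [IsStrictOrderedRing K] {s : Finset ι} {w : ι → K} (hw : ∀ i ∈ s, 0 < w i) {m : ι → ℕ}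
    {n : ι} (hn : n ∈ s) (hmn : 1 ≤ m n) (h : ∑ i ∈ s, m i * w i = w n) : ∑ i ∈ s, m i = 1 := by
  classical
  rw [← add_sum_erase _ _ hn] at h ⊢
  have hwn := hw n hn
  have hrest : 0 ≤ ∑ i ∈ s.erase n, (m i : K) * w i :=
    sum_nonneg fun i hi => mul_nonneg (Nat.cast_nonneg _) (hw i (mem_of_mem_erase hi)).le
  have hmn' : (1 : K) ≤ m n := by exact_mod_cast hmn
  have hmn_eq : (m n : K) = 1 := by nlinarith
  have hzero : ∀ i ∈ s.erase n, m i = 0 := fun i hi => by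
    have := (sum_eq_zero_iff_of_nonneg fun j hj =>
      mul_nonneg (Nat.cast_nonneg (m j)) (hw j (mem_of_mem_erase hj)).le).1
      (by rw [hmn_eq] at h; linarith) i hi
    exact_mod_cast (mul_eq_zero.1 this).resolve_right (hw i (mem_of_mem_erase hi)).ne'
  rw [sum_eq_zero hzero, add_zero]
  exact_mod_cast hmn_eq

theorem abs_sum_mul_units_le (c : ℤˣ → ℕ) : |∑ σ, (c σ : ℤ) * σ| ≤ ∑ σ, (c σ : ℤ) :=
  (abs_sum_le_sum_abs _ _).trans_eq (sum_congr rfl fun σ _ => by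
    rw [abs_mul, Int.isUnit_iff_abs_eq.1 σ.isUnit, Nat.abs_cast, mul_one])

namespace AtomicPuiseux

def eps (ℓ : ℕ → ℕ) (k : ℕ) : ℚ := 1 / (2 ^ (2 * k) * 3 ^ ℓ k)

-- `gen ℓ (k, -1)` and `gen ℓ (k, 1)` are the paper's `a_k` and `b_k`.
def gen (ℓ : ℕ → ℕ) (p : ℕ × ℤˣ) : ℚ := 1 / 2 ^ p.1 + (p.2 : ℤ) * eps ℓ p.1

variable (ℓ : ℕ → ℕ)

theorem gen_eq (p : ℕ × ℤˣ) :
    gen ℓ p = (2 ^ p.1 * 3 ^ ℓ p.1 + (p.2 : ℤ)) / (2 ^ (2 * p.1) * 3 ^ ℓ p.1) := by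
  rw [gen, eps, two_mul, pow_add]
  field_simp

theorem eps_nonneg (k : ℕ) : 0 ≤ eps ℓ k := by unfold eps; positivity

theorem eps_le_one_div_two_pow (k : ℕ) : eps ℓ k ≤ 1 / 2 ^ k := by
  unfold eps
  gcongr
  calc (2 : ℚ) ^ k ≤ 2 ^ (2 * k) := pow_le_pow_right₀ (by norm_num) (by omega)
    _ ≤ 2 ^ (2 * k) * 3 ^ ℓ k := le_mul_of_one_le_right (by positivity) (one_le_pow₀ (by norm_num))

theorem eps_le_one_div_two_pow_succ {k : ℕ} (hk : 1 ≤ k) : eps ℓ k ≤ 1 / 2 ^ (k + 1) := by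
  unfold eps
  gcongr
  calc (2 : ℚ) ^ (k + 1) ≤ 2 ^ (2 * k) := pow_le_pow_right₀ (by norm_num) (by omega)
    _ ≤ 2 ^ (2 * k) * 3 ^ ℓ k := le_mul_of_one_le_right (by positivity) (one_le_pow₀ (by norm_num))

theorem gen_mem_Icc (p : ℕ × ℤˣ) :
    gen ℓ p ∈ Set.Icc (1 / 2 ^ p.1 - eps ℓ p.1) (1 / 2 ^ p.1 + eps ℓ p.1) := by
  have := eps_nonneg ℓ p.1
  rcases Int.units_eq_one_or p.2 with h | h <;>
    simp only [gen, h, Set.mem_Icc] <;> push_cast <;> constructor <;> linarith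

theorem gen_nonneg (p : ℕ × ℤˣ) : 0 ≤ gen ℓ p := by
  linarith [(gen_mem_Icc ℓ p).1, eps_le_one_div_two_pow ℓ p.1]

theorem one_div_two_pow_succ_le_gen {p : ℕ × ℤˣ} (hp : 1 ≤ p.1) :
    1 / 2 ^ (p.1 + 1) ≤ gen ℓ p := by
  have h2 : (1 : ℚ) / 2 ^ p.1 = 2 * (1 / 2 ^ (p.1 + 1)) := by rw [pow_succ]; field_simp
  linarith [(gen_mem_Icc ℓ p).1, eps_le_one_div_two_pow_succ ℓ hp]

theorem gen_lt_one {p : ℕ × ℤˣ} (hp : 1 ≤ p.1) : gen ℓ p < 1 := by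
  have h2 : (1 : ℚ) / 2 ^ p.1 = 2 * (1 / 2 ^ (p.1 + 1)) := by rw [pow_succ]; field_simp
  have h4 : (1 : ℚ) / 2 ^ (p.1 + 1) ≤ 1 / 4 := by
    gcongr
    calc (4 : ℚ) = 2 ^ 2 := by norm_num
      _ ≤ 2 ^ (p.1 + 1) := pow_le_pow_right₀ (by norm_num) (by omega)
  linarith [(gen_mem_Icc ℓ p).2, eps_le_one_div_two_pow_succ ℓ hp]

theorem sum_mul_gen (c : ℤˣ → ℕ) (k : ℕ) :
    ∑ σ, (c σ : ℚ) * gen ℓ (k, σ) =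
      ((∑ σ, c σ : ℕ) : ℚ) / 2 ^ k + ((∑ σ, (c σ : ℤ) * σ : ℤ) : ℚ) * eps ℓ k := by
  simp only [gen, mul_add, sum_add_distrib]
  push_cast
  rw [sum_div, sum_mul]
  congr 1 <;> exact sum_congr rfl fun σ _ => by ring

theorem eps_mul_eq {k K : ℕ} (hkK : k ≤ K) (hℓ : ℓ k ≤ ℓ K) :
    eps ℓ k * (2 ^ (2 * K) * 3 ^ ℓ K) = 2 ^ (2 * K - 2 * k) * 3 ^ (ℓ K - ℓ k) := by
  rw [pow_sub₀ _ (by norm_num) (by omega), pow_sub₀ _ (by norm_num) hℓ, eps]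
  field_simp

theorem exists_int_eq_mul_sum_eps (hℓ : Monotone ℓ) (g : ℕ → ℤ) (N : ℕ) :
    ∃ W : ℤ, (2 ^ (2 * N) * 3 ^ ℓ N : ℚ) * ∑ k ∈ range (N + 1), g k * eps ℓ k = W := by
  refine ⟨∑ k ∈ range (N + 1), g k * 2 ^ (2 * N - 2 * k) * 3 ^ (ℓ N - ℓ k), ?_⟩
  push_cast
  rw [mul_sum]
  refine sum_congr rfl fun k hk => ?_
  have hkN : k ≤ N := Nat.lt_succ_iff.1 (mem_range.1 hk)
  linear_combination (g k : ℚ) * eps_mul_eq ℓ hkN (hℓ hkN)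

theorem three_pow_dvd_of_two_pow_mul_sum_eps_eq (hℓ : Monotone ℓ) (g : ℕ → ℤ) (N T : ℕ)
    (Z : ℤ) (hZ : 2 ^ T * ∑ k ∈ range (N + 2), g k * eps ℓ k = Z) :
    (3 : ℤ) ^ (ℓ (N + 1) - ℓ N) ∣ g (N + 1) := by
  obtain ⟨W, hW⟩ := exists_int_eq_mul_sum_eps ℓ hℓ g N
  set e := ℓ (N + 1) - ℓ N
  have hε : eps ℓ (N + 1) * (2 ^ (2 * (N + 1)) * 3 ^ ℓ N * 3 ^ e) = 1 := by
    rw [mul_assoc, ← pow_add, Nat.add_sub_of_le (hℓ (Nat.le_succ N)), eps]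
    field_simp
  rw [sum_range_succ] at hZ
  have hQ : (2 ^ T * g (N + 1) : ℚ) =
      3 ^ e * (2 ^ (2 * (N + 1)) * 3 ^ ℓ N * Z - 2 ^ T * 4 * W) := by
    rw [← hZ, ← hW]
    linear_combination (-(2 ^ T * g (N + 1) : ℚ)) * hε
  have hcop : IsCoprime ((3 : ℤ) ^ e) (2 ^ T) := (by norm_num : IsCoprime (3 : ℤ) 2).pow
  exact hcop.dvd_of_dvd_mul_left ⟨_, by exact_mod_cast hQ⟩

theorem eq_zero_of_two_pow_mul_sum_eps_eq (hℓ : Monotone ℓ) {g : ℕ → ℤ} (hg0 : g 0 = 0)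
    (T : ℕ) (Z : ℤ) (N : ℕ) (hg : ∀ k, 1 ≤ k → k ≤ N → |g k| < 3 ^ (ℓ k - ℓ (k - 1)))
    (hZ : 2 ^ T * ∑ k ∈ range (N + 1), g k * eps ℓ k = Z) : ∀ k ≤ N, g k = 0 := by
  induction N with
  | zero => intro k hk; rwa [Nat.le_zero.1 hk]
  | succ N ih =>
    have hlast : g (N + 1) = 0 := Int.eq_zero_of_abs_lt_dvd
      (three_pow_dvd_of_two_pow_mul_sum_eps_eq ℓ hℓ g N T Z hZ) (hg (N + 1) (by omega) le_rfl)
    rw [sum_range_succ, hlast, Int.cast_zero, zero_mul, add_zero] at hZ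
    intro k hk
    rcases Nat.lt_or_eq_of_le hk with hk | rfl
    · exact ih (fun j hj hjN => hg j hj (by omega)) hZ k (by omega)
    · exact hlast

theorem two_pow_mul_sub_sum_div_two_pow {n N : ℕ} (hnN : n ≤ N) (m : ℕ → ℕ) :
    (2 : ℚ) ^ N * (1 / 2 ^ n - ∑ k ∈ range (N + 1), (m k : ℚ) / 2 ^ k) =
      ((2 ^ (N - n) - ∑ k ∈ range (N + 1), m k * 2 ^ (N - k) : ℤ) : ℚ) := by
  push_cast
  rw [mul_sub, mul_sum, pow_sub₀ (2 : ℚ) two_ne_zero hnN]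
  congr 1
  · ring
  refine sum_congr rfl fun k hk => ?_
  rw [pow_sub₀ (2 : ℚ) two_ne_zero (Nat.lt_succ_iff.1 (mem_range.1 hk))]
  ring

variable {ℓ} {c : ℕ × ℤˣ → ℕ} {N n : ℕ} {τ : ℤˣ}

theorem sum_lt_two_pow_of_sum_sum_mul_gen_eq (hn : 1 ≤ n)
    (h : ∑ k ∈ range (N + 1), ∑ σ, (c (k, σ) : ℚ) * gen ℓ (k, σ) = gen ℓ (n, τ))
    {k : ℕ} (hk : 1 ≤ k) (hkN : k ≤ N) : ∑ σ, c (k, σ) < 2 ^ (k + 1) := by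
  have hlt : ((∑ σ, c (k, σ) : ℕ) : ℚ) * (1 / 2 ^ (k + 1)) < 1 :=
    calc ((∑ σ, c (k, σ) : ℕ) : ℚ) * (1 / 2 ^ (k + 1))
        = ∑ σ, (c (k, σ) : ℚ) * (1 / 2 ^ (k + 1)) := by push_cast; rw [sum_mul]
      _ ≤ ∑ σ, (c (k, σ) : ℚ) * gen ℓ (k, σ) := sum_le_sum fun σ _ =>
          mul_le_mul_of_nonneg_left (one_div_two_pow_succ_le_gen ℓ hk) (Nat.cast_nonneg _)
      _ ≤ gen ℓ (n, τ) := h ▸ single_le_sum (f := fun k => ∑ σ, (c (k, σ) : ℚ) * gen ℓ (k, σ))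
          (fun j _ => sum_nonneg fun σ _ => mul_nonneg (Nat.cast_nonneg _) (gen_nonneg ℓ _))
          (mem_range.2 (by omega))
      _ < 1 := gen_lt_one ℓ (p := (n, τ)) hn
  rw [mul_one_div, div_lt_one (by positivity)] at hlt
  exact_mod_cast hlt

theorem sum_sum_eq_one_of_sum_sum_mul_gen_eq (hℓ : Monotone ℓ)
    (hgrow : ∀ k ≥ 1, (2 : ℕ) ^ (k + 1) < 3 ^ (ℓ k - ℓ (k - 1)))
    (hc0 : ∀ σ, c (0, σ) = 0) (hn : 1 ≤ n) (hnN : n ≤ N)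
    (h : ∑ k ∈ range (N + 1), ∑ σ, (c (k, σ) : ℚ) * gen ℓ (k, σ) = gen ℓ (n, τ)) :
    ∑ k ∈ range (N + 1), ∑ σ, c (k, σ) = 1 := by
  set m : ℕ → ℕ := fun k => ∑ σ, c (k, σ)
  set s : ℕ → ℤ := fun k => ∑ σ, (c (k, σ) : ℤ) * σ
  set g : ℕ → ℤ := fun k => s k - if k = n then (τ : ℤ) else 0
  have hn_mem : n ∈ range (N + 1) := mem_range.2 (by omega)
  have hgε : ∑ k ∈ range (N + 1), (g k : ℚ) * eps ℓ k =
      1 / 2 ^ n - ∑ k ∈ range (N + 1), (m k : ℚ) / 2 ^ k := by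
    have hsplit : ∑ k ∈ range (N + 1), (g k : ℚ) * eps ℓ k =
        ∑ k ∈ range (N + 1), (s k : ℚ) * eps ℓ k - (τ : ℤ) * eps ℓ n := by
      simp only [g, Int.cast_sub, sub_mul, sum_sub_distrib, apply_ite (Int.cast : ℤ → ℚ),
        Int.cast_zero, ite_mul, zero_mul, sum_ite_eq', hn_mem, if_true]
    simp only [sum_mul_gen, sum_add_distrib] at h
    rw [gen] at h
    linarith
  have hg : ∀ k ≤ N, g k = 0 := by
    refine eq_zero_of_two_pow_mul_sum_eps_eq ℓ hℓ ?_ N _ N (fun k hk hkN => ?_)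
      (by rw [hgε, two_pow_mul_sub_sum_div_two_pow hnN])
    · simp [g, s, hc0, show 0 ≠ n by omega]
    calc |g k| ≤ |s k| + |if k = n then (τ : ℤ) else 0| := abs_sub _ _
      _ ≤ m k + 1 := by
        gcongr
        · exact_mod_cast abs_sum_mul_units_le fun σ => c (k, σ)
        · split_ifs <;> simp [Int.isUnit_iff_abs_eq.1 τ.isUnit]
      _ ≤ 2 ^ (k + 1) := by exact_mod_cast sum_lt_two_pow_of_sum_sum_mul_gen_eq hn h hk hkN
      _ < 3 ^ (ℓ k - ℓ (k - 1)) := by exact_mod_cast hgrow k hk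
  have hmn : (1 : ℤ) ≤ m n := by
    have hsn : s n = τ := by simpa [g, sub_eq_zero] using hg n hnN
    rw [← Int.isUnit_iff_abs_eq.1 τ.isUnit, ← hsn]
    exact abs_sum_mul_units_le _
  refine sum_eq_one_of_sum_mul_eq (w := fun k => (1 : ℚ) / 2 ^ k) (fun k _ => by positivity)
    hn_mem (by exact_mod_cast hmn) ?_
  have hzero : ∑ k ∈ range (N + 1), (g k : ℚ) * eps ℓ k = 0 := sum_eq_zero fun k hk => by
    rw [hg k (Nat.lt_succ_iff.1 (mem_range.1 hk)), Int.cast_zero, zero_mul]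
  simp only [mul_one_div]
  linarith

theorem card_eq_one_of_sum_map_gen_eq (hℓ : Monotone ℓ)
    (hgrow : ∀ k ≥ 1, (2 : ℕ) ^ (k + 1) < 3 ^ (ℓ k - ℓ (k - 1)))
    {u : Multiset (ℕ × ℤˣ)} (hu : ∀ p ∈ u, 1 ≤ p.1) {q : ℕ × ℤˣ} (hq : 1 ≤ q.1)
    (h : (u.map (gen ℓ)).sum = gen ℓ q) : Multiset.card u = 1 := by
  set N := max q.1 (u.map Prod.fst).sup
  have hN : ∀ p ∈ u, p.1 ≤ N := fun p hp =>
    le_max_of_le_right (Multiset.le_sup (Multiset.mem_map_of_mem _ hp))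
  rw [Multiset.sum_map_eq_sum_range_sum_count _ hN] at h
  simp only [nsmul_eq_mul] at h
  have hcard : Multiset.card u = (u.map fun _ => 1).sum := by simp
  rw [hcard, Multiset.sum_map_eq_sum_range_sum_count _ hN]
  simp only [smul_eq_mul, mul_one]
  exact sum_sum_eq_one_of_sum_sum_mul_gen_eq hℓ hgrow (c := fun p => u.count p)
    (fun σ => Multiset.count_eq_zero.2 fun h0 => by simpa using hu _ h0) hq (le_max_left _ _) h

end AtomicPuiseux

open AtomicPuiseux

theorem atomic_with_atoms_A_general (ℓ : ℕ → ℕ) (hmono : StrictMono ℓ)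
    (hgrow : ∀ n ≥ 1, (2 : ℕ) ^ (n + 1) < 3 ^ (ℓ n - ℓ (n - 1)))
    (a b : ℕ → ℚ)
    (ha : ∀ n, a n = ((2 ^ n * 3 ^ (ℓ n) - 1) : ℚ) / (2 ^ (2 * n) * 3 ^ (ℓ n)))
    (hb : ∀ n, b n = ((2 ^ n * 3 ^ (ℓ n) + 1) : ℚ) / (2 ^ (2 * n) * 3 ^ (ℓ n)))
    (A : Set ℚ) (hA : A = {q : ℚ | ∃ n : ℕ, 1 ≤ n ∧ (q = a n ∨ q = b n)})
    (M : AddSubmonoid ℚ) (hM : M = AddSubmonoid.closure A) :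
    AddAtomic M ∧ ∀ q : ℚ, (∃ h : q ∈ M, IsAddAtom (⟨q, h⟩ : M)) ↔ q ∈ A := by
  have hA_eq : A = gen ℓ '' {p | 1 ≤ p.1} := by
    ext q
    simp only [hA, Set.mem_image, Prod.exists]
    constructor
    · rintro ⟨n, hn, rfl | rfl⟩
      · exact ⟨n, -1, hn, by rw [gen_eq, ha]; push_cast; ring⟩
      · exact ⟨n, 1, hn, by rw [gen_eq, hb]; push_cast; ring⟩
    · rintro ⟨n, σ, hn, rfl⟩
      refine ⟨n, hn, ?_⟩
      rcases Int.units_eq_one_or σ with rfl | rfl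
      · exact Or.inr (by rw [gen_eq, hb]; push_cast; ring)
      · exact Or.inl (by rw [gen_eq, ha]; push_cast; ring)
  have hS : HasOnlyTrivialSums A := hA_eq ▸ HasOnlyTrivialSums.of_image
    fun _ hu _ hq => card_eq_one_of_sum_map_gen_eq hmono.monotone hgrow hu hq
  subst hM
  exact ⟨addAtomic_closure fun _ hx => hS.isAddAtom hx, fun _ => hS.exists_isAddAtom_iff⟩

theorem atomic_with_atoms_A (ℓ : ℕ → ℕ) (hmono : StrictMono ℓ) (hpos : ∀ n, 0 < ℓ n)
    (hgrow : ∀ n ≥ 1, (2 : ℕ) ^ (n + 1) < 3 ^ (ℓ n - ℓ (n - 1)))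
    (a b : ℕ → ℚ)
    (ha : ∀ n, a n = ((2 ^ n * 3 ^ (ℓ n) - 1) : ℚ) / (2 ^ (2 * n) * 3 ^ (ℓ n)))
    (hb : ∀ n, b n = ((2 ^ n * 3 ^ (ℓ n) + 1) : ℚ) / (2 ^ (2 * n) * 3 ^ (ℓ n)))
    (A : Set ℚ) (hA : A = {q : ℚ | ∃ n : ℕ, 1 ≤ n ∧ (q = a n ∨ q = b n)})
    (M : AddSubmonoid ℚ) (hM : M = AddSubmonoid.closure A) :
    AddAtomic M ∧ ∀ q : ℚ, (∃ h : q ∈ M, IsAddAtom (⟨q, h⟩ : M)) ↔ q ∈ A :=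
  atomic_with_atoms_A_general ℓ hmono hgrow a b ha hb A hA M hM
end

section
/- For every n ≥ 1, the polynomial x^{2·3^n} + x^{3^n} + 1 is irreducible in ℤ/2ℤ[x]. -/
/-!
The polynomial is the cyclotomic polynomial `Φ_{3^(n+1)}`, and over `𝔽_p` the irreducible factors
of `Φ_m` (for `p ∤ m`) all have degree equal to the order of `p` modulo `m`. So it suffices that
`2` is a primitive root modulo `3^(n+1)`: its square `4 = 1 + 3` has order `3^n`, and its
reduction `-1` modulo `3` has order `2`.
-/

open Polynomial

theorem orderOf_eq_two_mul_of_two_dvd {G : Type*} [Monoid G] {x : G} {m : ℕ}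
    (h2 : 2 ∣ orderOf x) (hsq : orderOf (x ^ 2) = m) : orderOf x = 2 * m := by
  rw [← hsq, orderOf_pow' x two_ne_zero, Nat.gcd_eq_right h2, Nat.mul_div_cancel' h2]

theorem cyclotomic_three_pow_succ (R : Type*) [CommRing R] (n : ℕ) :
    cyclotomic (3 ^ (n + 1)) R = X ^ (2 * 3 ^ n) + X ^ 3 ^ n + 1 := by
  rw [cyclotomic_prime_pow_eq_geom_sum Nat.prime_three, Finset.sum_range_succ,
    Finset.sum_range_succ, Finset.sum_range_one]
  ring

theorem orderOf_two_zmod_three_pow_succ (n : ℕ) :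
    orderOf (2 : ZMod (3 ^ (n + 1))) = 2 * 3 ^ n := by
  have hmod3 : 2 ∣ orderOf (2 : ZMod (3 ^ (n + 1))) := by
    have h := orderOf_map_dvd
      (ZMod.castHom (dvd_pow_self 3 n.succ_ne_zero) (ZMod 3)).toMonoidHom 2
    have h3 : orderOf (2 : ZMod 3) = 2 := orderOf_eq_prime (by decide) (by decide)
    rwa [RingHom.toMonoidHom_eq_coe, MonoidHom.coe_coe, map_ofNat, h3] at h
  have hsq : (2 : ZMod (3 ^ (n + 1))) ^ 2 = 1 + (3 : ℕ) := by norm_num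
  refine orderOf_eq_two_mul_of_two_dvd hmod3 ?_
  rw [hsq]
  exact ZMod.orderOf_one_add_prime Nat.prime_three (by decide) n

theorem irreducible_cyclotomic_like_general (n : ℕ) :
    Irreducible (X ^ (2 * 3 ^ n) + X ^ (3 ^ n) + 1 : (ZMod 2)[X]) := by
  rw [← cyclotomic_three_pow_succ]
  refine ZMod.irreducible_of_dvd_cyclotomic_of_natDegree
    (Odd.not_two_dvd_nat (Odd.pow (by decide))) dvd_rfl ?_
  rw [natDegree_cyclotomic, Nat.totient_prime_pow_succ Nat.prime_three, ← orderOf_units,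
    ZMod.coe_unitOfCoprime, Nat.cast_ofNat, orderOf_two_zmod_three_pow_succ, mul_comm]

theorem irreducible_cyclotomic_like (n : ℕ) (hn : 1 ≤ n) :
    Irreducible (X ^ (2 * 3 ^ n) + X ^ (3 ^ n) + 1 : (ZMod 2)[X]) :=
  irreducible_cyclotomic_like_general n
end
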